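/- Let p(r,s,τ) = τ² − (rs − 3)τ + r³ + s³ − 6rs + 9 as a real polynomial in three variables. If (r,s,τ) ∈ ℝ³ satisfies p(r,s,τ) = 0 and all three partial derivatives ∂p/∂r, ∂p/∂s, ∂p/∂τ vanish at (r,s,τ), then (r,s,τ) = (3,3,3). -/

import Mathlib

/-!
Combining `∂p/∂r = 3r² − sτ − 6s` and `∂p/∂s = 3s² − rτ − 6r` as `r·∂p/∂r − s·∂p/∂s` gives
`r³ = s³`, so a singular point lies on the diagonal `r = s`. There `∂p/∂τ = 0` reads
`τ = (r² − 3)/2`, and substituting this into `∂p/∂r = 0` leaves `r(r − 3)² = 0`. The root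
`r = 0` gives `τ = −3/2` and `p = 27/4 ≠ 0`, so only `r = 3`, `τ = 3` remains.
-/

/-- The defining polynomial of the component `X₀` of the character variety, in the trace
coordinates `r, s, τ`. -/
def pX0 (r s τ : ℝ) : ℝ :=
  τ ^ 2 - (r * s - 3) * τ + r ^ 3 + s ^ 3 - 6 * (r * s) + 9

theorem deriv_pX0_r (r s τ : ℝ) :
    deriv (fun x => pX0 x s τ) r = 3 * r ^ 2 - s * τ - 6 * s := by
  simp (disch := fun_prop) only [pX0, deriv_fun_add, deriv_fun_sub, deriv_fun_mul,
    deriv_fun_pow, deriv_const', deriv_id'']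
  ring

theorem deriv_pX0_s (r s τ : ℝ) :
    deriv (fun x => pX0 r x τ) s = 3 * s ^ 2 - r * τ - 6 * r := by
  simp (disch := fun_prop) only [pX0, deriv_fun_add, deriv_fun_sub, deriv_fun_mul,
    deriv_fun_pow, deriv_const', deriv_const_mul_id', deriv_id'']
  ring

theorem deriv_pX0_τ (r s τ : ℝ) : deriv (fun x => pX0 r s x) τ = 2 * τ - (r * s - 3) := by
  simp (disch := fun_prop) only [pX0, deriv_fun_add, deriv_fun_sub, deriv_fun_pow,
    deriv_const', deriv_const_mul_id', deriv_id'']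
  ring

section OrderedField

variable {K : Type*} [Field K] [LinearOrder K] [IsStrictOrderedRing K]

theorem eq_of_critical_r_s {r s τ : K} (hr : 3 * r ^ 2 - s * τ - 6 * s = 0)
    (hs : 3 * s ^ 2 - r * τ - 6 * r = 0) : r = s :=
  (Odd.pow_inj (by decide : Odd 3)).mp <| by linear_combination (r / 3) * hr - (s / 3) * hs

theorem eq_three_of_critical_diag {r τ : K}
    (h0 : τ ^ 2 - (r ^ 2 - 3) * τ + 2 * r ^ 3 - 6 * r ^ 2 + 9 = 0)
    (hr : 3 * r ^ 2 - r * τ - 6 * r = 0) (hτ : 2 * τ - (r ^ 2 - 3) = 0) : r = 3 ∧ τ = 3 := by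
  have hcubic : r * (r - 3) ^ 2 = 0 := by linear_combination (-2) * hr - r * hτ
  rcases mul_eq_zero.mp hcubic with rfl | hr3
  · obtain rfl : τ = -3 / 2 := by linear_combination hτ / 2
    norm_num at h0
  · obtain rfl : r = 3 := by linear_combination (pow_eq_zero_iff two_ne_zero).mp hr3
    exact ⟨rfl, by linear_combination hτ / 2⟩

end OrderedField

/-- The unique singular point of the surface `{p = 0}`, where
`p(r,s,τ) = τ² − (rs − 3)τ + r³ + s³ − 6rs + 9`, is `(3,3,3)`: if `p` and its three
partial derivatives vanish at `(r,s,τ)`, then `(r,s,τ) = (3,3,3)`. -/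
theorem singular_point_unique (r s τ : ℝ)
    (h0 : pX0 r s τ = 0)
    (hr : deriv (fun x => pX0 x s τ) r = 0)
    (hs : deriv (fun x => pX0 r x τ) s = 0)
    (hτ : deriv (fun x => pX0 r s x) τ = 0) :
    (r, s, τ) = (3, 3, 3) := by
  rw [deriv_pX0_r] at hr
  rw [deriv_pX0_s] at hs
  rw [deriv_pX0_τ] at hτ
  obtain rfl : r = s := eq_of_critical_r_s hr hs
  obtain ⟨rfl, rfl⟩ := eq_three_of_critical_diag (by unfold pX0 at h0; linear_combination h0) hr
    (by linear_combination hτ)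
  rfl
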